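/- arXiv:2505.16555 — 4 statements merged into one kernel-verified Lean document; each statement's English description precedes it below -/
import Mathlib

section
/- Let Ω ⊆ ℝ² be open, let U, V : ℝ² → ℝ be continuously differentiable on Ω, and suppose that the planar cross product ∇V(x) × ∇U(x) := ∂V/∂x(x)·∂U/∂y(x) − ∂V/∂y(x)·∂U/∂x(x) vanishes for every x ∈ Ω. If p ∈ Ω and ∇U(p) ≠ 0, then there exist an open neighborhood N ⊆ Ω of p and a differentiable function f : ℝ → ℝ such that V(x) = f(U(x)) for all x ∈ N; i.e., the two generalized potentials are locally functionally dependent. -/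
/-- Partial derivative with respect to the first variable of `f : ℝ × ℝ → ℝ`. -/
noncomputable def pdx (f : ℝ × ℝ → ℝ) (p : ℝ × ℝ) : ℝ := fderiv ℝ f p (1, 0)

/-- Partial derivative with respect to the second variable of `f : ℝ × ℝ → ℝ`. -/
noncomputable def pdy (f : ℝ × ℝ → ℝ) (p : ℝ × ℝ) : ℝ := fderiv ℝ f p (0, 1)

open Set Metric

lemma clm_apply₂ (L : ℝ × ℝ →L[ℝ] ℝ) (v : ℝ × ℝ) :
    L v = v.1 * L (1, 0) + v.2 * L (0, 1) := by
  have h : v = v.1 • ((1:ℝ), (0:ℝ)) + v.2 • ((0:ℝ), (1:ℝ)) := by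
    simp [Prod.ext_iff]
  calc L v = L (v.1 • ((1:ℝ), (0:ℝ)) + v.2 • ((0:ℝ), (1:ℝ))) := by rw [← h]
    _ = v.1 * L (1, 0) + v.2 * L (0, 1) := by
          rw [map_add, map_smul, map_smul, smul_eq_mul, smul_eq_mul]

noncomputable def shearEquiv (a b : ℝ) (ha : a ≠ 0) : (ℝ × ℝ) ≃L[ℝ] (ℝ × ℝ) :=
  ContinuousLinearEquiv.equivOfInverse
    ((a • ContinuousLinearMap.fst ℝ ℝ ℝ + b • ContinuousLinearMap.snd ℝ ℝ ℝ).prod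
      (ContinuousLinearMap.snd ℝ ℝ ℝ))
    ((a⁻¹ • (ContinuousLinearMap.fst ℝ ℝ ℝ - b • ContinuousLinearMap.snd ℝ ℝ ℝ)).prod
      (ContinuousLinearMap.snd ℝ ℝ ℝ))
    (fun v => by
      ext
      · simp only [ContinuousLinearMap.prod_apply, ContinuousLinearMap.smul_apply,
          ContinuousLinearMap.add_apply, ContinuousLinearMap.sub_apply,
          ContinuousLinearMap.coe_fst', ContinuousLinearMap.coe_snd', smul_eq_mul]
        field_simp
        ring
      · simp)
    (fun v => by
      ext
      · simp only [ContinuousLinearMap.prod_apply, ContinuousLinearMap.smul_apply,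
          ContinuousLinearMap.add_apply, ContinuousLinearMap.sub_apply,
          ContinuousLinearMap.coe_fst', ContinuousLinearMap.coe_snd', smul_eq_mul]
        field_simp
        ring
      · simp)

lemma shearEquiv_apply (a b : ℝ) (ha : a ≠ 0) (v : ℝ × ℝ) :
    shearEquiv a b ha v = (a * v.1 + b * v.2, v.2) := by
  rw [shearEquiv, ContinuousLinearEquiv.equivOfInverse_apply]
  simp [smul_eq_mul]

lemma shearEquiv_symm_apply (a b : ℝ) (ha : a ≠ 0) (v : ℝ × ℝ) :
    (shearEquiv a b ha).symm v = (a⁻¹ * (v.1 - b * v.2), v.2) := by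
  rw [ContinuousLinearEquiv.symm_apply_eq, shearEquiv_apply]
  ext
  · simp only
    field_simp
    ring
  · simp

lemma extend_differentiable (g : ℝ → ℝ) (c d : ℝ) (hcd : c ≤ d) (O : Set ℝ) (hO : IsOpen O)
    (hsub : Icc c d ⊆ O) (hg : ContDiffOn ℝ 1 g O) :
    ∃ f : ℝ → ℝ, Differentiable ℝ f ∧ ∀ t ∈ Icc c d, f t = g t := by
  set φ : ℝ → ℝ := fun t => max c (min t d) with hφ
  have hφc : Continuous φ := continuous_const.max (continuous_id.min continuous_const)
  have hφm : ∀ t, φ t ∈ Icc c d := fun t => ⟨le_max_left _ _, max_le hcd (min_le_right _ _)⟩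
  have hD : ContinuousOn (deriv g) O := hg.continuousOn_deriv_of_isOpen hO le_rfl
  have hh : Continuous (fun t => deriv g (φ t)) :=
    hD.comp_continuous hφc fun t => hsub (hφm t)
  refine ⟨fun t => g c + ∫ s in c..t, deriv g (φ s), fun t => ?_, fun t ht => ?_⟩
  · exact (((hh.integral_hasStrictDerivAt c t).hasDerivAt).const_add _).differentiableAt
  · have key : ∫ s in c..t, deriv g (φ s) = g t - g c := by
      apply intervalIntegral.integral_eq_sub_of_hasDerivAt
      · intro s hs
        rw [uIcc_of_le ht.1] at hs
        have hsO : s ∈ Icc c d := ⟨hs.1, le_trans hs.2 ht.2⟩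
        have hφs : φ s = s := by
          rw [hφ]
          simp [min_eq_left hsO.2, max_eq_right hsO.1]
        rw [hφs]
        exact ((hg.contDiffAt (hO.mem_nhds (hsub hsO))).differentiableAt one_ne_zero).hasDerivAt
      · exact hh.intervalIntegrable _ _
    show g c + (∫ s in c..t, deriv g (φ s)) = g t
    rw [key]; ring

lemma mem_ball_prod {z q : ℝ × ℝ} {r : ℝ} :
    z ∈ ball q r ↔ dist z.1 q.1 < r ∧ dist z.2 q.2 < r := by
  rw [mem_ball, Prod.dist_eq, max_lt_iff]

lemma aux_main (Ω : Set (ℝ × ℝ)) (hΩ : IsOpen Ω) (U V : ℝ × ℝ → ℝ)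
    (hU : ContDiffOn ℝ 1 U Ω) (hV : ContDiffOn ℝ 1 V Ω)
    (hcross : ∀ x ∈ Ω, pdx V x * pdy U x - pdy V x * pdx U x = 0)
    (p : ℝ × ℝ) (hp : p ∈ Ω) (ha : pdx U p ≠ 0) :
    ∃ N : Set (ℝ × ℝ), IsOpen N ∧ p ∈ N ∧ N ⊆ Ω ∧
      ∃ f : ℝ → ℝ, Differentiable ℝ f ∧ ∀ x ∈ N, V x = f (U x) := by
  classical
  set Φ : ℝ × ℝ → ℝ × ℝ := fun x => (U x, x.2) with hΦdef
  -- the good set where pdx U ≠ 0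
  have hfdUc : ContinuousOn (fderiv ℝ U) Ω := hU.continuousOn_fderiv_of_isOpen hΩ le_rfl
  have hpdxc : ContinuousOn (pdx U) Ω := by
    have hev : Continuous (fun L : (ℝ × ℝ) →L[ℝ] ℝ => L (1, 0)) :=
      (ContinuousLinearMap.apply ℝ ℝ ((1:ℝ), (0:ℝ))).continuous
    exact hev.comp_continuousOn hfdUc
  set G : Set (ℝ × ℝ) := Ω ∩ (pdx U) ⁻¹' {0}ᶜ with hGdef
  have hGopen : IsOpen G := hpdxc.isOpen_inter_preimage hΩ isOpen_compl_singleton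
  have hGne : ∀ x ∈ G, pdx U x ≠ 0 := fun x hx => hx.2
  have hGΩ : ∀ x ∈ G, x ∈ Ω := fun x hx => hx.1
  have hpG : p ∈ G := ⟨hp, ha⟩
  -- differentiability facts
  have hUdiff : ∀ x ∈ Ω, DifferentiableAt ℝ U x := fun x hx =>
    (hU.contDiffAt (hΩ.mem_nhds hx)).differentiableAt one_ne_zero
  have hVdiff : ∀ x ∈ Ω, DifferentiableAt ℝ V x := fun x hx =>
    (hV.contDiffAt (hΩ.mem_nhds hx)).differentiableAt one_ne_zero
  -- derivative of Φ on G
  have hΦderiv : ∀ x (hx : x ∈ G), HasFDerivAt Φ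
      ((shearEquiv (pdx U x) (pdy U x) (hGne x hx) : (ℝ × ℝ) ≃L[ℝ] (ℝ × ℝ)) :
        (ℝ × ℝ) →L[ℝ] (ℝ × ℝ)) x := by
    intro x hx
    have h1 : HasFDerivAt Φ ((fderiv ℝ U x).prod (ContinuousLinearMap.snd ℝ ℝ ℝ)) x :=
      (hUdiff x (hGΩ x hx)).hasFDerivAt.prodMk hasFDerivAt_snd
    have h2 : ((shearEquiv (pdx U x) (pdy U x) (hGne x hx)) :
        (ℝ × ℝ) →L[ℝ] (ℝ × ℝ)) = (fderiv ℝ U x).prod (ContinuousLinearMap.snd ℝ ℝ ℝ) := by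
      apply ContinuousLinearMap.ext
      intro v
      rw [ContinuousLinearEquiv.coe_coe, shearEquiv_apply]
      apply Prod.ext
      · show pdx U x * v.1 + pdy U x * v.2 = fderiv ℝ U x v
        rw [clm_apply₂ (fderiv ℝ U x) v]
        simp only [pdx, pdy]
        ring
      · rfl
    rw [h2]
    exact h1
  -- Φ is C¹ on Ω
  have hΦcd : ∀ x ∈ Ω, ContDiffAt ℝ 1 Φ x := fun x hx =>
    (hU.contDiffAt (hΩ.mem_nhds hx)).prodMk contDiff_snd.contDiffAt
  -- strict derivative at p
  have hΦstrict : HasStrictFDerivAt Φ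
      ((shearEquiv (pdx U p) (pdy U p) ha : (ℝ × ℝ) ≃L[ℝ] (ℝ × ℝ)) :
        (ℝ × ℝ) →L[ℝ] (ℝ × ℝ)) p := by
    have h := (hΦcd p hp).hasStrictFDerivAt one_ne_zero
    rwa [(hΦderiv p hpG).fderiv] at h
  set Ψ := hΦstrict.toOpenPartialHomeomorph Φ with hΨdef
  have hΨcoe : ⇑Ψ = Φ := hΦstrict.toOpenPartialHomeomorph_coe
  have hpsrc : p ∈ Ψ.source := hΦstrict.mem_toOpenPartialHomeomorph_source
  set q : ℝ × ℝ := Φ p with hqdef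
  have hqtgt : q ∈ Ψ.target := by
    have := Ψ.map_source hpsrc
    rwa [hΨcoe] at this
  have hψq : Ψ.symm q = p := by
    have := Ψ.left_inv hpsrc
    rwa [hΨcoe] at this
  -- choose a ball around q landing in good territory
  have hTopen : IsOpen (Ψ.target ∩ Ψ.symm ⁻¹' G) :=
    Ψ.continuousOn_symm.isOpen_inter_preimage Ψ.open_target hGopen
  have hqT : q ∈ Ψ.target ∩ Ψ.symm ⁻¹' G := ⟨hqtgt, by rw [mem_preimage, hψq]; exact hpG⟩
  obtain ⟨r, hr0, hball⟩ := Metric.isOpen_iff.1 hTopen q hqT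
  -- derivative of Ψ.symm on the ball
  have hψderiv : ∀ z (hz : z ∈ ball q r), HasFDerivAt Ψ.symm
      (((shearEquiv (pdx U (Ψ.symm z)) (pdy U (Ψ.symm z))
        (hGne _ (hball hz).2)).symm : (ℝ × ℝ) ≃L[ℝ] (ℝ × ℝ)) : (ℝ × ℝ) →L[ℝ] (ℝ × ℝ)) z := by
    intro z hz
    apply Ψ.hasFDerivAt_symm (hball hz).1
    rw [hΨcoe]
    exact hΦderiv _ (hball hz).2
  -- constancy in the second variable on the ball
  have hconst : ∀ z ∈ ball q r, V (Ψ.symm z) = V (Ψ.symm (z.1, q.2)) := by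
    intro z hz
    have hz12 := mem_ball_prod.1 hz
    have hder : ∀ s ∈ ball q.2 r, HasDerivAt (fun s : ℝ => V (Ψ.symm (z.1, s))) 0 s := by
      intro s hs
      have hmem : ((z.1 : ℝ), s) ∈ ball q r := mem_ball_prod.2 ⟨hz12.1, hs⟩
      have hxG : Ψ.symm (z.1, s) ∈ G := (hball hmem).2
      set x : ℝ × ℝ := Ψ.symm (z.1, s) with hxdef
      have hane : pdx U x ≠ 0 := hGne x hxG
      have hψd := hψderiv _ hmem
      have hVd : HasFDerivAt V (fderiv ℝ V x) x := (hVdiff x (hGΩ x hxG)).hasFDerivAt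
      have hcomp : HasFDerivAt (fun y => V (Ψ.symm y))
          ((fderiv ℝ V x).comp
            (((shearEquiv (pdx U x) (pdy U x) (hGne _ (hball hmem).2)).symm :
              (ℝ × ℝ) ≃L[ℝ] (ℝ × ℝ)) : (ℝ × ℝ) →L[ℝ] (ℝ × ℝ))) (z.1, s) :=
        HasFDerivAt.comp ((z.1 : ℝ), (s : ℝ)) hVd hψd
      have hline : HasDerivAt (fun s : ℝ => ((z.1 : ℝ), s)) (((0:ℝ), (1:ℝ))) s :=
        (hasDerivAt_const s z.1).prodMk (hasDerivAt_id s)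
      have hfinal := hcomp.comp_hasDerivAt s hline
      have hval : ((fderiv ℝ V x).comp
          (((shearEquiv (pdx U x) (pdy U x) (hGne _ (hball hmem).2)).symm :
            (ℝ × ℝ) ≃L[ℝ] (ℝ × ℝ)) : (ℝ × ℝ) →L[ℝ] (ℝ × ℝ))) ((0:ℝ), (1:ℝ)) = 0 := by
        rw [ContinuousLinearMap.comp_apply, ContinuousLinearEquiv.coe_coe,
          shearEquiv_symm_apply, clm_apply₂]
        have hc : pdx V x * pdy U x = pdy V x * pdx U x := by
          linarith [hcross x (hGΩ x hxG)]
        show (pdx U x)⁻¹ * (0 - pdy U x * 1) * pdx V x + 1 * pdy V x = 0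
        field_simp
        linarith
      rw [hval] at hfinal
      exact hfinal
    have hdiffOn : DifferentiableOn ℝ (fun s : ℝ => V (Ψ.symm (z.1, s))) (ball q.2 r) :=
      fun s hs => ((hder s hs).differentiableAt).differentiableWithinAt
    have hfw : ∀ s ∈ ball q.2 r,
        fderivWithin ℝ (fun s : ℝ => V (Ψ.symm (z.1, s))) (ball q.2 r) s = 0 := by
      intro s hs
      rw [fderivWithin_of_isOpen isOpen_ball hs, (hder s hs).hasFDerivAt.fderiv]
      apply ContinuousLinearMap.ext
      intro v
      simp
    have hz2 : z.2 ∈ ball q.2 r := mem_ball.2 hz12.2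
    have hq2 : q.2 ∈ ball q.2 r := mem_ball_self hr0
    have := (convex_ball q.2 r).is_const_of_fderivWithin_eq_zero hdiffOn hfw hz2 hq2
    simpa using this
  -- the one-variable function
  set g : ℝ → ℝ := fun t => V (Ψ.symm (t, q.2)) with hgdef
  have hgcd : ContDiffOn ℝ 1 g (ball q.1 r) := by
    intro t ht
    apply ContDiffAt.contDiffWithinAt
    have hmem : ((t : ℝ), q.2) ∈ ball q r :=
      mem_ball_prod.2 ⟨mem_ball.1 ht, by simpa using hr0⟩
    have hT := hball hmem
    have hψcd : ContDiffAt ℝ 1 Ψ.symm (t, q.2) := by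
      apply Ψ.contDiffAt_symm hT.1
      · rw [hΨcoe]; exact hΦderiv _ hT.2
      · rw [hΨcoe]; exact hΦcd _ (hGΩ _ hT.2)
    have hVcd : ContDiffAt ℝ 1 V (Ψ.symm (t, q.2)) :=
      hV.contDiffAt (hΩ.mem_nhds (hGΩ _ hT.2))
    have hlin : ContDiffAt ℝ 1 (fun t : ℝ => ((t : ℝ), q.2)) t :=
      (contDiff_id.prodMk contDiff_const).contDiffAt
    have := (hVcd.comp (t, q.2) hψcd).comp t hlin
    simpa [Function.comp_def] using this
  -- extend g
  have hIccsub : Icc (q.1 - r/2) (q.1 + r/2) ⊆ ball q.1 r := by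
    intro t ht
    rw [mem_ball, Real.dist_eq, abs_lt]
    constructor <;> [linarith [ht.1]; linarith [ht.2]]
  obtain ⟨f, hfdiff, hfeq⟩ := extend_differentiable g (q.1 - r/2) (q.1 + r/2)
    (by linarith) (ball q.1 r) isOpen_ball hIccsub hgcd
  -- the neighborhood
  have hΦcont : ContinuousOn Φ (Ψ.source ∩ Ω) :=
    ((hU.continuousOn.mono inter_subset_right).prodMk continuous_snd.continuousOn)
  refine ⟨(Ψ.source ∩ Ω) ∩ Φ ⁻¹' (ball q (r/2)),
    hΦcont.isOpen_inter_preimage (Ψ.open_source.inter hΩ) isOpen_ball,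
    ⟨⟨hpsrc, hp⟩, by exact mem_ball_self (half_pos hr0)⟩,
    fun x hx => hx.1.2, f, hfdiff, ?_⟩
  intro x hx
  have hzball : Φ x ∈ ball q r := ball_subset_ball (by linarith) hx.2
  have hψz : Ψ.symm (Φ x) = x := by
    have := Ψ.left_inv hx.1.1
    rwa [hΨcoe] at this
  have h1 : V x = V (Ψ.symm ((Φ x).1, q.2)) := by
    have h := hconst (Φ x) hzball
    rwa [hψz] at h
  have h2 : (Φ x).1 = U x := rfl
  have hIcc : U x ∈ Icc (q.1 - r/2) (q.1 + r/2) := by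
    have hd : dist (Φ x).1 q.1 < r/2 :=
      lt_of_le_of_lt (le_max_left _ _) (by rw [← Prod.dist_eq]; exact hx.2)
    rw [h2, Real.dist_eq, abs_lt] at hd
    constructor <;> [linarith [hd.1]; linarith [hd.2]]
  rw [h1]
  have h3 : V (Ψ.symm ((Φ x).1, q.2)) = g ((Φ x).1) := rfl
  rw [h3, h2, hfeq (U x) hIcc]

theorem local_functional_dependence_of_potentials
    (Ω : Set (ℝ × ℝ)) (hΩ : IsOpen Ω)
    (U V : ℝ × ℝ → ℝ)
    (hU : ContDiffOn ℝ 1 U Ω) (hV : ContDiffOn ℝ 1 V Ω)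
    (hcross : ∀ x ∈ Ω, pdx V x * pdy U x - pdy V x * pdx U x = 0)
    (p : ℝ × ℝ) (hp : p ∈ Ω) (hgradU : (pdx U p, pdy U p) ≠ (0, 0)) :
    ∃ N : Set (ℝ × ℝ), IsOpen N ∧ p ∈ N ∧ N ⊆ Ω ∧
      ∃ f : ℝ → ℝ, Differentiable ℝ f ∧ ∀ x ∈ N, V x = f (U x) := by
  by_cases ha : pdx U p = 0
  · have hb : pdy U p ≠ 0 := by
      intro hb
      exact hgradU (by rw [ha, hb])
    set σ : (ℝ × ℝ) ≃L[ℝ] (ℝ × ℝ) := ContinuousLinearEquiv.prodComm ℝ ℝ ℝ with hσ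
    have hσapp : ∀ y : ℝ × ℝ, σ y = (y.2, y.1) := fun y => rfl
    set Ω' : Set (ℝ × ℝ) := ⇑σ ⁻¹' Ω with hΩ'def
    have hΩ'open : IsOpen Ω' := hΩ.preimage σ.continuous
    have hU' : ContDiffOn ℝ 1 (U ∘ ⇑σ) Ω' := hU.comp σ.contDiff.contDiffOn (fun _ hx => hx)
    have hV' : ContDiffOn ℝ 1 (V ∘ ⇑σ) Ω' := hV.comp σ.contDiff.contDiffOn (fun _ hx => hx)
    have hpd : ∀ (W : ℝ × ℝ → ℝ) (x : ℝ × ℝ),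
        pdx (W ∘ ⇑σ) x = pdy W (σ x) ∧ pdy (W ∘ ⇑σ) x = pdx W (σ x) := by
      intro W x
      constructor <;>
      · simp only [pdx, pdy, σ.comp_right_fderiv, ContinuousLinearMap.comp_apply]
        rfl
    have hcross' : ∀ x ∈ Ω',
        pdx (V ∘ ⇑σ) x * pdy (U ∘ ⇑σ) x - pdy (V ∘ ⇑σ) x * pdx (U ∘ ⇑σ) x = 0 := by
      intro x hx
      rw [(hpd V x).1, (hpd V x).2, (hpd U x).1, (hpd U x).2]
      have := hcross (σ x) hx
      linarith
    have hp' : ((p.2 : ℝ), (p.1 : ℝ)) ∈ Ω' := by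
      show σ (p.2, p.1) ∈ Ω
      rw [hσapp]
      exact hp
    have ha' : pdx (U ∘ ⇑σ) (p.2, p.1) ≠ 0 := by
      rw [(hpd U (p.2, p.1)).1]
      exact hb
    obtain ⟨N', hN'open, hpN', hN'Ω, f, hf, hfeq⟩ :=
      aux_main Ω' hΩ'open (U ∘ ⇑σ) (V ∘ ⇑σ) hU' hV' hcross' (p.2, p.1) hp' ha'
    refine ⟨⇑σ ⁻¹' N', hN'open.preimage σ.continuous, ?_, ?_, f, hf, ?_⟩
    · show σ p ∈ N'
      rw [hσapp]
      exact hpN'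
    · intro x hx
      have h1 : σ x ∈ Ω' := hN'Ω hx
      exact h1
    · intro x hx
      exact hfeq (σ x) hx
  · exact aux_main Ω hΩ U V hU hV hcross p hp ha
end

section
/- Let F₀, a > 0 be real constants, and on the open set {(x,y) ∈ ℝ² : x ≠ 0 and y ≠ 0} define V(x,y) = a⁻⁵x³y² and U(x,y) = -F₀a²(x+y)/(xy). Then -V(x,y)·∇U(x,y) = -(F₀/a³)·(xy², x³) at every point of this set; i.e., the curl force field F(x,y) = -(F₀/a³)(xy², x³) admits the generalized potential representation F = -V∇U. -/
theorem generalized_potential_representation_of_Berry_force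
    (F₀ a : ℝ) (hF₀ : 0 < F₀) (ha : 0 < a)
    (V U : ℝ × ℝ → ℝ)
    (hV : ∀ p : ℝ × ℝ, V p = (a ^ 5)⁻¹ * p.1 ^ 3 * p.2 ^ 2)
    (hU : ∀ p : ℝ × ℝ, U p = -F₀ * a ^ 2 * (p.1 + p.2) / (p.1 * p.2)) :
    ∀ p : ℝ × ℝ, p.1 ≠ 0 → p.2 ≠ 0 →
      (-V p * pdx U p, -V p * pdy U p)
        = (-(F₀ / a ^ 3) * (p.1 * p.2 ^ 2), -(F₀ / a ^ 3) * p.1 ^ 3) := by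
  intro p hx hy
  set g : ℝ × ℝ → ℝ := fun q => (-F₀ * a ^ 2) * (q.2⁻¹ + q.1⁻¹) with hg
  -- U agrees with g near p
  have hopen : IsOpen {q : ℝ × ℝ | q.1 ≠ 0 ∧ q.2 ≠ 0} := by
    have : {q : ℝ × ℝ | q.1 ≠ 0 ∧ q.2 ≠ 0}
        = (Prod.fst ⁻¹' {(0:ℝ)}ᶜ) ∩ (Prod.snd ⁻¹' {(0:ℝ)}ᶜ) := rfl
    rw [this]
    exact (isOpen_compl_singleton.preimage continuous_fst).inter
      (isOpen_compl_singleton.preimage continuous_snd)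
  have hev : U =ᶠ[nhds p] g := by
    filter_upwards [hopen.mem_nhds ⟨hx, hy⟩] with q hq
    rcases hq with ⟨hq1, hq2⟩
    rw [hU q, hg]
    field_simp
  have hfd : fderiv ℝ U p = fderiv ℝ g p := hev.fderiv_eq
  -- compute fderiv of g
  have h1 : HasFDerivAt (fun q : ℝ × ℝ => q.1⁻¹)
      ((-(p.1 ^ 2)⁻¹) • (ContinuousLinearMap.fst ℝ ℝ ℝ)) p :=
    (hasDerivAt_inv hx).comp_hasFDerivAt p hasFDerivAt_fst
  have h2 : HasFDerivAt (fun q : ℝ × ℝ => q.2⁻¹)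
      ((-(p.2 ^ 2)⁻¹) • (ContinuousLinearMap.snd ℝ ℝ ℝ)) p :=
    (hasDerivAt_inv hy).comp_hasFDerivAt p hasFDerivAt_snd
  have hgd : HasFDerivAt g ((-F₀ * a ^ 2) •
      ((-(p.2 ^ 2)⁻¹) • (ContinuousLinearMap.snd ℝ ℝ ℝ)
        + (-(p.1 ^ 2)⁻¹) • (ContinuousLinearMap.fst ℝ ℝ ℝ))) p :=
    (h2.add h1).const_smul (-F₀ * a ^ 2)
  have hUx : pdx U p = (-F₀ * a ^ 2) * (-(p.1 ^ 2)⁻¹) := by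
    rw [pdx, hfd, hgd.fderiv]
    simp
  have hUy : pdy U p = (-F₀ * a ^ 2) * (-(p.2 ^ 2)⁻¹) := by
    rw [pdy, hfd, hgd.fderiv]
    simp
  rw [hUx, hUy, hV p]
  have ha' : a ≠ 0 := ha.ne'
  simp only [Prod.mk.injEq]
  constructor <;> field_simp
end

section
/- Let Ω ⊆ ℝ² be open, let U, V : ℝ² → ℝ be continuously differentiable on Ω with V(x) ≠ 0 for all x ∈ Ω, let F = -V∇U on Ω, and let p ∈ Ω with ∇U(p) ≠ 0. Then the Pfaffian equation F·dx = 0 has the local inaccessibility property at p: for every neighborhood N ⊆ Ω of p there exists a point y ∈ N such that no continuously differentiable path γ : [0,1] → Ω with γ(0) = p, γ(1) = y satisfies F(γ(t))·γ'(t) = 0 for all t ∈ [0,1]. -/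
open scoped RealInnerProductSpace

theorem local_inaccessibility_of_2D_curl_force
    (Ω : Set (EuclideanSpace ℝ (Fin 2))) (hΩ : IsOpen Ω)
    (U V : EuclideanSpace ℝ (Fin 2) → ℝ)
    (hU : ContDiffOn ℝ 1 U Ω) (hV : ContDiffOn ℝ 1 V Ω)
    (hV0 : ∀ x ∈ Ω, V x ≠ 0)
    (F : EuclideanSpace ℝ (Fin 2) → EuclideanSpace ℝ (Fin 2))
    (hF : ∀ x ∈ Ω, F x = -V x • gradient U x)
    (p : EuclideanSpace ℝ (Fin 2)) (hp : p ∈ Ω) (hgradU : gradient U p ≠ 0) :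
    ∀ N ∈ nhds p, N ⊆ Ω →
      ∃ y ∈ N, ¬ ∃ γ : ℝ → EuclideanSpace ℝ (Fin 2),
        ContDiff ℝ 1 γ ∧ (∀ t ∈ Set.Icc (0 : ℝ) 1, γ t ∈ Ω) ∧
        γ 0 = p ∧ γ 1 = y ∧
        ∀ t ∈ Set.Icc (0 : ℝ) 1, ⟪F (γ t), deriv γ t⟫ = 0 := by
  intro N hN hNΩ
  -- U is differentiable at every point of Ω
  have hUdiff : ∀ x ∈ Ω, DifferentiableAt ℝ U x := fun x hx =>
    (hU.differentiableOn one_ne_zero).differentiableAt (hΩ.mem_nhds hx)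
  by_contra h
  push_neg at h
  -- every point of N has the same U value as p
  have key : ∀ y ∈ N, U y = U p := by
    intro y hy
    obtain ⟨γ, hγ, hγΩ, h0, h1, horth⟩ := h y hy
    -- the inner product of the gradient with the velocity vanishes
    have hiz : ∀ t ∈ Set.Icc (0:ℝ) 1, ⟪gradient U (γ t), deriv γ t⟫ = 0 := by
      intro t ht
      have := horth t ht
      rw [hF _ (hγΩ t ht), inner_smul_left] at this
      have hVne : V (γ t) ≠ 0 := hV0 _ (hγΩ t ht)
      simpa [neg_mul, neg_eq_zero, hVne] using this
    -- U ∘ γ has zero derivative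
    have hderiv : ∀ t ∈ Set.Icc (0:ℝ) 1, HasDerivAt (fun s => U (γ s)) 0 t := by
      intro t ht
      have hU' : HasGradientAt U (gradient U (γ t)) (γ t) :=
        (hUdiff _ (hγΩ t ht)).hasGradientAt
      have hF' : HasFDerivAt U ((InnerProductSpace.toDual ℝ _) (gradient U (γ t))) (γ t) :=
        hU'
      have hγ' : HasDerivAt γ (deriv γ t) t := (hγ.differentiable one_ne_zero t).hasDerivAt
      have := hF'.comp_hasDerivAt t hγ'
      rw [InnerProductSpace.toDual_apply_apply, hiz t ht] at this; exact this
    have hcont : ContinuousOn (fun s => U (γ s)) (Set.Icc 0 1) := fun t ht =>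
      ((hderiv t ht).continuousAt).continuousWithinAt
    have := constant_of_has_deriv_right_zero hcont
      (fun t ht => ((hderiv t (Set.mem_Icc_of_Ico ht)).hasDerivWithinAt)) 1
      (Set.right_mem_Icc.2 zero_le_one)
    simpa [h0, h1] using this
  -- hence U is locally constant at p, so its gradient vanishes
  have hEq : U =ᶠ[nhds p] fun _ => U p :=
    Filter.eventually_of_mem hN fun y hy => key y hy
  have : gradient U p = gradient (fun _ => U p) p := hEq.gradient_eq
  rw [gradient_fun_const] at this
  exact hgradU this
end

section
/- Let Ω ⊆ ℝ³ be open, let U, W : ℝ³ → ℝ be twice continuously differentiable on Ω and V : ℝ³ → ℝ be continuously differentiable on Ω, and define F : Ω → ℝ³ by F(x) = -V(x)∇U(x) − ∇W(x). Suppose at a point x ∈ Ω the gauge conditions ∇V(x)·∇U(x) = 0 and ∇V(x) ≠ 0 hold. Then the generalized potential gradient ∇U is recovered from the force by ∇U(x) = (∇V(x) × curl F(x)) / ‖∇V(x)‖². -/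
/-- The `i`-th partial derivative of `f : ℝ³ → ℝ`. -/
noncomputable def pd3 (i : Fin 3) (f : EuclideanSpace ℝ (Fin 3) → ℝ)
    (x : EuclideanSpace ℝ (Fin 3)) : ℝ :=
  fderiv ℝ f x (EuclideanSpace.single i 1)

/-- The gradient `∇f = (∂f/∂x, ∂f/∂y, ∂f/∂z)` of `f : ℝ³ → ℝ`. -/
noncomputable def grad3 (f : EuclideanSpace ℝ (Fin 3) → ℝ)
    (x : EuclideanSpace ℝ (Fin 3)) : EuclideanSpace ℝ (Fin 3) :=
  WithLp.toLp 2 ![pd3 0 f x, pd3 1 f x, pd3 2 f x]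

/-- The standard cross product on ℝ³. -/
noncomputable def cross3 (a b : EuclideanSpace ℝ (Fin 3)) : EuclideanSpace ℝ (Fin 3) :=
  WithLp.toLp 2 ![a 1 * b 2 - a 2 * b 1, a 2 * b 0 - a 0 * b 2, a 0 * b 1 - a 1 * b 0]

/-- The Euclidean dot product on ℝ³. -/
noncomputable def dot3 (a b : EuclideanSpace ℝ (Fin 3)) : ℝ :=
  a 0 * b 0 + a 1 * b 1 + a 2 * b 2

/-- The curl of a vector field `F : ℝ³ → ℝ³`:
`curl F = (∂F₃/∂y − ∂F₂/∂z, ∂F₁/∂z − ∂F₃/∂x, ∂F₂/∂x − ∂F₁/∂y)`. -/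
noncomputable def curl3 (F : EuclideanSpace ℝ (Fin 3) → EuclideanSpace ℝ (Fin 3))
    (x : EuclideanSpace ℝ (Fin 3)) : EuclideanSpace ℝ (Fin 3) :=
  WithLp.toLp 2 ![pd3 1 (fun p => F p 2) x - pd3 2 (fun p => F p 1) x,
    pd3 2 (fun p => F p 0) x - pd3 0 (fun p => F p 2) x,
    pd3 0 (fun p => F p 1) x - pd3 1 (fun p => F p 0) x]

lemma grad3_apply (f : EuclideanSpace ℝ (Fin 3) → ℝ) (p : EuclideanSpace ℝ (Fin 3)) (j : Fin 3) :
    grad3 f p j = pd3 j f p := by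
  fin_cases j <;> rfl

theorem grad_U_recovered_from_force
    (Ω : Set (EuclideanSpace ℝ (Fin 3))) (hΩ : IsOpen Ω)
    (U V W : EuclideanSpace ℝ (Fin 3) → ℝ)
    (hU : ContDiffOn ℝ 2 U Ω) (hV : ContDiffOn ℝ 1 V Ω) (hW : ContDiffOn ℝ 2 W Ω)
    (F : EuclideanSpace ℝ (Fin 3) → EuclideanSpace ℝ (Fin 3))
    (hF : ∀ x ∈ Ω, F x = -V x • grad3 U x - grad3 W x)
    (x : EuclideanSpace ℝ (Fin 3)) (hx : x ∈ Ω)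
    (hgauge : dot3 (grad3 V x) (grad3 U x) = 0)
    (hVne : grad3 V x ≠ 0) :
    grad3 U x = (‖grad3 V x‖ ^ 2)⁻¹ • cross3 (grad3 V x) (curl3 F x) := by
  have hmem : Ω ∈ nhds x := hΩ.mem_nhds hx
  have hUx : ContDiffAt ℝ 2 U x := hU.contDiffAt hmem
  have hWx : ContDiffAt ℝ 2 W x := hW.contDiffAt hmem
  have hVx : ContDiffAt ℝ 1 V x := hV.contDiffAt hmem
  set e : Fin 3 → EuclideanSpace ℝ (Fin 3) := fun i => EuclideanSpace.single i 1 with he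
  -- differentiability of the first derivatives of U and W
  have hU1 : DifferentiableAt ℝ (fderiv ℝ U) x :=
    (hUx.fderiv_right (m := 1) (by norm_num)).differentiableAt one_ne_zero
  have hW1 : DifferentiableAt ℝ (fderiv ℝ W) x :=
    (hWx.fderiv_right (m := 1) (by norm_num)).differentiableAt one_ne_zero
  set DU := fderiv ℝ (fderiv ℝ U) x with hDU
  set DW := fderiv ℝ (fderiv ℝ W) x with hDW
  -- derivatives of the partial derivative functions
  have hpdU : ∀ j : Fin 3, HasFDerivAt (fun p => pd3 j U p)
      ((ContinuousLinearMap.apply ℝ ℝ (e j)).comp DU) x :=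
    fun j => (ContinuousLinearMap.apply ℝ ℝ (e j)).hasFDerivAt.comp x hU1.hasFDerivAt
  have hpdW : ∀ j : Fin 3, HasFDerivAt (fun p => pd3 j W p)
      ((ContinuousLinearMap.apply ℝ ℝ (e j)).comp DW) x :=
    fun j => (ContinuousLinearMap.apply ℝ ℝ (e j)).hasFDerivAt.comp x hW1.hasFDerivAt
  have hVd : HasFDerivAt V (fderiv ℝ V x) x := (hVx.differentiableAt one_ne_zero).hasFDerivAt
  -- local form of the components of F
  have hFj : ∀ j : Fin 3, (fun p => F p j) =ᶠ[nhds x]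
      (fun p => -V p * pd3 j U p - pd3 j W p) := by
    intro j
    filter_upwards [hmem] with p hp
    rw [hF p hp]
    simp [grad3_apply, PiLp.sub_apply, PiLp.smul_apply, smul_eq_mul]
  -- the key computation of the partial derivatives of components of F
  have key : ∀ i j : Fin 3, pd3 i (fun p => F p j) x
      = -(pd3 i V x * pd3 j U x) - V x * DU (e i) (e j) - DW (e i) (e j) := by
    intro i j
    have h1 : HasFDerivAt (fun p => -V p * pd3 j U p - pd3 j W p)
        (((-V x) • ((ContinuousLinearMap.apply ℝ ℝ (e j)).comp DU)
          + pd3 j U x • (-(fderiv ℝ V x)))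
          - (ContinuousLinearMap.apply ℝ ℝ (e j)).comp DW) x :=
      (HasFDerivAt.mul hVd.neg (hpdU j)).sub (hpdW j)
    have h2 : HasFDerivAt (fun p => F p j)
        (((-V x) • ((ContinuousLinearMap.apply ℝ ℝ (e j)).comp DU)
          + pd3 j U x • (-(fderiv ℝ V x)))
          - (ContinuousLinearMap.apply ℝ ℝ (e j)).comp DW) x :=
      h1.congr_of_eventuallyEq (hFj j)
    have h3 := h2.fderiv
    show fderiv ℝ (fun p => F p j) x (e i) = _
    rw [h3]
    simp only [ContinuousLinearMap.sub_apply, ContinuousLinearMap.add_apply,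
      ContinuousLinearMap.smul_apply, ContinuousLinearMap.comp_apply,
      ContinuousLinearMap.apply_apply, ContinuousLinearMap.neg_apply, smul_eq_mul]
    show -V x * DU (e i) (e j) + pd3 j U x * -(pd3 i V x) - DW (e i) (e j) = _
    ring
  -- symmetry of second derivatives
  have hsymU : ∀ v w, DU v w = DU w v := hUx.isSymmSndFDerivAt (by norm_num)
  have hsymW : ∀ v w, DW v w = DW w v := hWx.isSymmSndFDerivAt (by norm_num)
  -- curl components
  have hc0 : curl3 F x 0 = pd3 2 V x * pd3 1 U x - pd3 1 V x * pd3 2 U x := by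
    show pd3 1 (fun p => F p 2) x - pd3 2 (fun p => F p 1) x = _
    rw [key 1 2, key 2 1, hsymU (e 2) (e 1), hsymW (e 2) (e 1)]; ring
  have hc1 : curl3 F x 1 = pd3 0 V x * pd3 2 U x - pd3 2 V x * pd3 0 U x := by
    show pd3 2 (fun p => F p 0) x - pd3 0 (fun p => F p 2) x = _
    rw [key 2 0, key 0 2, hsymU (e 0) (e 2), hsymW (e 0) (e 2)]; ring
  have hc2 : curl3 F x 2 = pd3 1 V x * pd3 0 U x - pd3 0 V x * pd3 1 U x := by
    show pd3 0 (fun p => F p 1) x - pd3 1 (fun p => F p 0) x = _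
    rw [key 0 1, key 1 0, hsymU (e 1) (e 0), hsymW (e 1) (e 0)]; ring
  -- norm of grad V
  have hnorm : ‖grad3 V x‖ ^ 2 = pd3 0 V x ^ 2 + pd3 1 V x ^ 2 + pd3 2 V x ^ 2 := by
    rw [← real_inner_self_eq_norm_sq]
    simp only [PiLp.inner_apply, Fin.sum_univ_three, grad3_apply, RCLike.inner_apply, conj_trivial]
    ring
  have hnz : pd3 0 V x ^ 2 + pd3 1 V x ^ 2 + pd3 2 V x ^ 2 ≠ 0 := by
    rw [← hnorm]
    exact pow_ne_zero 2 (norm_ne_zero_iff.mpr hVne)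
  have hg : pd3 0 V x * pd3 0 U x + pd3 1 V x * pd3 1 U x + pd3 2 V x * pd3 2 U x = 0 := by
    simpa [dot3, grad3_apply] using hgauge
  -- finish componentwise
  ext j
  rw [PiLp.smul_apply, smul_eq_mul, hnorm]
  fin_cases j
  · show pd3 0 U x = _ * cross3 (grad3 V x) (curl3 F x) 0
    show pd3 0 U x = _ * (grad3 V x 1 * curl3 F x 2 - grad3 V x 2 * curl3 F x 1)
    rw [grad3_apply, grad3_apply, hc1, hc2]
    field_simp
    linear_combination pd3 0 V x * hg
  · show pd3 1 U x = _ * cross3 (grad3 V x) (curl3 F x) 1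
    show pd3 1 U x = _ * (grad3 V x 2 * curl3 F x 0 - grad3 V x 0 * curl3 F x 2)
    rw [grad3_apply, grad3_apply, hc0, hc2]
    field_simp
    linear_combination pd3 1 V x * hg
  · show pd3 2 U x = _ * cross3 (grad3 V x) (curl3 F x) 2
    show pd3 2 U x = _ * (grad3 V x 0 * curl3 F x 1 - grad3 V x 1 * curl3 F x 0)
    rw [grad3_apply, grad3_apply, hc0, hc1]
    field_simp
    linear_combination pd3 2 V x * hg
end
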